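/- Assume the saddle-point assumption. Let x ∈ ℝⁿ, λ ∈ ℝᵐ with λ ≥ 0, ν ∈ ℝˡ, and choose g₀ ∈ ∂f₀(x) and gᵢ ∈ ∂Fᵢ(x) for i = 1,…,m; set G_x := g₀ + Σᵢ λᵢ gᵢ + Aᵀν. Then 0 ≤ ⟨G_x, x − x*⟩ − ⟨F(x), λ − λ*⟩ − ⟨A x − b, ν − ν*⟩. -/

import Mathlib

open scoped RealInnerProductSpace
open Matrix

/-- `A x` for `A` an `l × n` real matrix and `x ∈ ℝⁿ`, as Euclidean spaces. -/
noncomputable def mulVecE {l n : ℕ} (A : Matrix (Fin l) (Fin n) ℝ)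
    (x : EuclideanSpace ℝ (Fin n)) : EuclideanSpace ℝ (Fin l) :=
  Matrix.toEuclideanLin A x

/-- `F(x) = (max{f₁(x),0}, …, max{f_m(x),0})`. -/
noncomputable def Fplus {n m : ℕ} (f : Fin m → EuclideanSpace ℝ (Fin n) → ℝ)
    (x : EuclideanSpace ℝ (Fin n)) : EuclideanSpace ℝ (Fin m) :=
  (WithLp.equiv 2 (Fin m → ℝ)).symm fun i => max (f i x) 0

/-- The Lagrangian `L(x, λ, ν) = f₀(x) + λᵀF(x) + νᵀ(Ax - b)`. -/
noncomputable def Lag {n m l : ℕ} (f0 : EuclideanSpace ℝ (Fin n) → ℝ)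
    (f : Fin m → EuclideanSpace ℝ (Fin n) → ℝ)
    (A : Matrix (Fin l) (Fin n) ℝ) (b : EuclideanSpace ℝ (Fin l))
    (x : EuclideanSpace ℝ (Fin n)) (lam : EuclideanSpace ℝ (Fin m))
    (nu : EuclideanSpace ℝ (Fin l)) : ℝ :=
  f0 x + ⟪lam, Fplus f x⟫ + ⟪nu, mulVecE A x - b⟫

/-!
`G_x` is a subgradient of `L(·, λ, ν)` at `x`, so the left saddle inequality gives
`⟨G_x, x - x*⟩ ≥ L(x, λ, ν) - L(x*, λ, ν) ≥ L(x, λ, ν) - p*`. Since `L` is affine in the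
multipliers, `L(x, λ, ν) - ⟨F(x), λ - λ*⟩ - ⟨Ax - b, ν - ν*⟩ = L(x, λ*, ν*)`, which is `≥ p*`
by the right saddle inequality.
-/

section

variable {n m l : ℕ}

theorem inner_mulVecE_transpose (A : Matrix (Fin l) (Fin n) ℝ)
    (v : EuclideanSpace ℝ (Fin l)) (z : EuclideanSpace ℝ (Fin n)) :
    ⟪mulVecE Aᵀ v, z⟫ = ⟪v, mulVecE A z⟫ := by
  rw [mulVecE, ← conjTranspose_eq_transpose_of_trivial,
    Matrix.toEuclideanLin_conjTranspose_eq_adjoint, LinearMap.adjoint_inner_left, mulVecE]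

theorem inner_mulVecE_transpose_sub (A : Matrix (Fin l) (Fin n) ℝ)
    (b nu : EuclideanSpace ℝ (Fin l)) (x y : EuclideanSpace ℝ (Fin n)) :
    ⟪mulVecE Aᵀ nu, y - x⟫ = ⟪nu, mulVecE A y - b⟫ - ⟪nu, mulVecE A x - b⟫ := by
  rw [inner_mulVecE_transpose, ← inner_sub_right, mulVecE, mulVecE, mulVecE, map_sub,
    sub_sub_sub_cancel_right]

theorem inner_Fplus (f : Fin m → EuclideanSpace ℝ (Fin n) → ℝ)
    (lam : EuclideanSpace ℝ (Fin m)) (x : EuclideanSpace ℝ (Fin n)) :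
    ⟪lam, Fplus f x⟫ = ∑ i, lam i * max (f i x) 0 := by
  simp [Fplus, PiLp.inner_apply, mul_comm]

theorem inner_sum_smul_le_inner_Fplus_sub (f : Fin m → EuclideanSpace ℝ (Fin n) → ℝ)
    {lam : EuclideanSpace ℝ (Fin m)} (hlam : ∀ i, 0 ≤ lam i)
    {x : EuclideanSpace ℝ (Fin n)} {g : Fin m → EuclideanSpace ℝ (Fin n)}
    (hg : ∀ i y, ⟪g i, y - x⟫ ≤ max (f i y) 0 - max (f i x) 0) (y : EuclideanSpace ℝ (Fin n)) :
    ⟪∑ i, lam i • g i, y - x⟫ ≤ ⟪lam, Fplus f y⟫ - ⟪lam, Fplus f x⟫ := by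
  rw [sum_inner, inner_Fplus, inner_Fplus, ← Finset.sum_sub_distrib]
  refine Finset.sum_le_sum fun i _ => ?_
  rw [real_inner_smul_left, ← mul_sub]
  exact mul_le_mul_of_nonneg_left (hg i y) (hlam i)

theorem inner_le_Lag_sub_Lag {f0 : EuclideanSpace ℝ (Fin n) → ℝ}
    {f : Fin m → EuclideanSpace ℝ (Fin n) → ℝ}
    (A : Matrix (Fin l) (Fin n) ℝ) (b : EuclideanSpace ℝ (Fin l))
    {x : EuclideanSpace ℝ (Fin n)} {lam : EuclideanSpace ℝ (Fin m)}
    (nu : EuclideanSpace ℝ (Fin l)) (hlam : ∀ i, 0 ≤ lam i)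
    {g0 : EuclideanSpace ℝ (Fin n)} (hg0 : ∀ y, ⟪g0, y - x⟫ ≤ f0 y - f0 x)
    {g : Fin m → EuclideanSpace ℝ (Fin n)}
    (hg : ∀ i y, ⟪g i, y - x⟫ ≤ max (f i y) 0 - max (f i x) 0) (y : EuclideanSpace ℝ (Fin n)) :
    ⟪g0 + (∑ i, lam i • g i) + mulVecE Aᵀ nu, y - x⟫ ≤
      Lag f0 f A b y lam nu - Lag f0 f A b x lam nu := by
  have hF := inner_sum_smul_le_inner_Fplus_sub f hlam hg y
  rw [inner_add_left, inner_add_left, inner_mulVecE_transpose_sub A b, Lag, Lag]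
  linarith [hg0 y]

theorem Lag_sub_Lag (f0 : EuclideanSpace ℝ (Fin n) → ℝ)
    (f : Fin m → EuclideanSpace ℝ (Fin n) → ℝ)
    (A : Matrix (Fin l) (Fin n) ℝ) (b : EuclideanSpace ℝ (Fin l))
    (x : EuclideanSpace ℝ (Fin n)) (lam lam' : EuclideanSpace ℝ (Fin m))
    (nu nu' : EuclideanSpace ℝ (Fin l)) :
    Lag f0 f A b x lam nu - Lag f0 f A b x lam' nu' =
      ⟪Fplus f x, lam - lam'⟫ + ⟪mulVecE A x - b, nu - nu'⟫ := by
  simp only [Lag, inner_sub_right, real_inner_comm (Fplus f x),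
    real_inner_comm (mulVecE A x - b)]
  ring

end

theorem saddle_monotonicity_general
    (n m l : ℕ)
    (f0 : EuclideanSpace ℝ (Fin n) → ℝ)
    (f : Fin m → EuclideanSpace ℝ (Fin n) → ℝ)
    (A : Matrix (Fin l) (Fin n) ℝ) (b : EuclideanSpace ℝ (Fin l))
    (pstar : ℝ)
    (xstar : EuclideanSpace ℝ (Fin n))
    (lamstar : EuclideanSpace ℝ (Fin m)) (nustar : EuclideanSpace ℝ (Fin l))
    -- saddle-point assumption
    (hsaddle1 : ∀ (lam : EuclideanSpace ℝ (Fin m)) (nu : EuclideanSpace ℝ (Fin l)),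
      (∀ i, 0 ≤ lam i) → Lag f0 f A b xstar lam nu ≤ pstar)
    (hsaddle2 : ∀ x, pstar ≤ Lag f0 f A b x lamstar nustar)
    -- the point and the subgradients
    (x : EuclideanSpace ℝ (Fin n))
    (lam : EuclideanSpace ℝ (Fin m)) (nu : EuclideanSpace ℝ (Fin l))
    (hlam : ∀ i, 0 ≤ lam i)
    (g0 : EuclideanSpace ℝ (Fin n))
    (hg0 : ∀ y, ⟪g0, y - x⟫ ≤ f0 y - f0 x)
    (g : Fin m → EuclideanSpace ℝ (Fin n))
    (hg : ∀ i y, ⟪g i, y - x⟫ ≤ max (f i y) 0 - max (f i x) 0) :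
    0 ≤ ⟪g0 + (∑ i, lam i • g i) + mulVecE Aᵀ nu, x - xstar⟫
        - ⟪Fplus f x, lam - lamstar⟫ - ⟪mulVecE A x - b, nu - nustar⟫ := by
  have hsubgrad := inner_le_Lag_sub_Lag A b nu hlam hg0 hg xstar
  rw [← neg_sub x xstar, inner_neg_right] at hsubgrad
  have haffine := Lag_sub_Lag f0 f A b x lam lamstar nu nustar
  linarith [hsaddle1 lam nu hlam, hsaddle2 x]

/-- Under the saddle-point assumption, for any `x`, `λ ≥ 0`, `ν`, any subgradients
`g₀ ∈ ∂f₀(x)`, `gᵢ ∈ ∂Fᵢ(x)`, and `G_x = g₀ + Σᵢ λᵢ gᵢ + Aᵀν`, one has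
`0 ≤ ⟨G_x, x - x*⟩ - ⟨F(x), λ - λ*⟩ - ⟨Ax - b, ν - ν*⟩`. -/
theorem saddle_monotonicity
    (n m l : ℕ)
    (f0 : EuclideanSpace ℝ (Fin n) → ℝ)
    (f : Fin m → EuclideanSpace ℝ (Fin n) → ℝ)
    (hf0 : ConvexOn ℝ Set.univ f0)
    (hf : ∀ i, ConvexOn ℝ Set.univ (f i))
    (A : Matrix (Fin l) (Fin n) ℝ) (b : EuclideanSpace ℝ (Fin l))
    (pstar : ℝ)
    (xstar : EuclideanSpace ℝ (Fin n))
    (lamstar : EuclideanSpace ℝ (Fin m)) (nustar : EuclideanSpace ℝ (Fin l))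
    -- x* is primal optimal with value p*
    (hxfeas : ∀ i, f i xstar ≤ 0) (hxeq : mulVecE A xstar = b)
    (hxval : f0 xstar = pstar)
    -- saddle-point assumption
    (hlamstar : ∀ i, 0 ≤ lamstar i)
    (hsaddle_eq : Lag f0 f A b xstar lamstar nustar = pstar)
    (hsaddle1 : ∀ (lam : EuclideanSpace ℝ (Fin m)) (nu : EuclideanSpace ℝ (Fin l)),
      (∀ i, 0 ≤ lam i) → Lag f0 f A b xstar lam nu ≤ pstar)
    (hsaddle2 : ∀ x, pstar ≤ Lag f0 f A b x lamstar nustar)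
    -- the point and the subgradients
    (x : EuclideanSpace ℝ (Fin n))
    (lam : EuclideanSpace ℝ (Fin m)) (nu : EuclideanSpace ℝ (Fin l))
    (hlam : ∀ i, 0 ≤ lam i)
    (g0 : EuclideanSpace ℝ (Fin n))
    (hg0 : ∀ y, ⟪g0, y - x⟫ ≤ f0 y - f0 x)
    (g : Fin m → EuclideanSpace ℝ (Fin n))
    (hg : ∀ i y, ⟪g i, y - x⟫ ≤ max (f i y) 0 - max (f i x) 0) :
    0 ≤ ⟪g0 + (∑ i, lam i • g i) + mulVecE Aᵀ nu, x - xstar⟫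
        - ⟪Fplus f x, lam - lamstar⟫ - ⟪mulVecE A x - b, nu - nustar⟫ :=
  saddle_monotonicity_general n m l f0 f A b pstar xstar lamstar nustar hsaddle1 hsaddle2 x lam nu
    hlam g0 hg0 g hg
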